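/- Let Ω, K, b, M, E̲ and the faces M_f be as in the setting of a coherent assessment with K nonempty, and let P̲ be an extension of (K, b). For E ∈ M let N_M(E) = {h : ⟨E, h⟩ ≤ ⟨p, h⟩ for all p ∈ M} be the normal cone of M at E, and for E, F ∈ M define the normed distance d_E(E, F) = sup_{h ∈ N_M(E), h ≠ 0} (⟨F, h⟩ − ⟨E, h⟩)/‖h‖. Then d(P̲, E̲) ≤ max_{E ∈ ext(M)} min_{f ∈ K} max_{F ∈ ext(M_f)} d_E(E, F), where d(P̲, E̲) = sup_{h ≠ 0} |P̲(h) − E̲(h)|/‖h‖. -/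

import Mathlib

open scoped BigOperators ENNReal

/-- Inner product of gambles: `⟨f,g⟩ = ∑ x, f x * g x`. -/
noncomputable def ip {Ω : Type*} [Fintype Ω] (f g : Ω → ℝ) : ℝ := ∑ x, f x * g x

/-- Euclidean norm of a gamble. -/
noncomputable def nrm {Ω : Type*} [Fintype Ω] (f : Ω → ℝ) : ℝ := Real.sqrt (ip f f)

/-- A probability mass vector on `Ω`. -/
def IsPMV {Ω : Type*} [Fintype Ω] (p : Ω → ℝ) : Prop :=
  (∀ x, 0 ≤ p x) ∧ ∑ x, p x = 1

/-- The distance between two real-valued functionals on gambles: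
`d(F, G) = sup_{h ≠ 0} |F(h) − G(h)|/‖h‖`, a supremum in `[0, ∞]`. -/
noncomputable def dLP {Ω : Type*} [Fintype Ω] (F G : (Ω → ℝ) → ℝ) : ℝ≥0∞ :=
  ⨆ h ∈ {h : Ω → ℝ | h ≠ 0}, ENNReal.ofReal (|F h - G h| / nrm h)

/-- The normed distance `d_E(E, F)` between `E, F ∈ M`: the supremum of
`(⟨F, h⟩ − ⟨E, h⟩)/‖h‖` over nonzero gambles `h` in the normal cone
`N_M(E) = {h : ⟨E, h⟩ ≤ ⟨p, h⟩ ∀ p ∈ M}`. -/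
noncomputable def dNC {Ω : Type*} [Fintype Ω] (M : Set (Ω → ℝ)) (E F : Ω → ℝ) : ℝ≥0∞ :=
  ⨆ h ∈ {h : Ω → ℝ | (∀ p ∈ M, ip E h ≤ ip p h) ∧ h ≠ 0},
    ENNReal.ofReal ((ip F h - ip E h) / nrm h)

/-!
Fix a nonzero gamble `h`. Since the extension's credal set `M'` lies in `M`, `E̲ h ≤ P̲ h`, and
`E̲ h = ⟨E, h⟩` for an extreme point `E` of `M` minimising `h`; this `h` lies in the normal cone
of `M` at `E`. For `f ∈ K` the minimum `P̲ f = b f = E̲ f` is attained at some `q ∈ M'`, which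
therefore lies in the face `M_f`. Hence `P̲ h ≤ ⟨q, h⟩ ≤ ⟨F, h⟩` for an extreme point `F` of the
compact face `M_f` maximising `h`, so `(P̲ h − E̲ h)/‖h‖ ≤ (⟨F, h⟩ − ⟨E, h⟩)/‖h‖ ≤ d_E(E, F)`.
-/

section ExtremePoints

variable {E : Type*} [AddCommGroup E] [Module ℝ E] [TopologicalSpace E] [T2Space E]
  [IsTopologicalAddGroup E] [ContinuousSMul ℝ E] [LocallyConvexSpace ℝ E] {s : Set E}

theorem IsCompact.exists_mem_extremePoints_isMaxOn (hs : IsCompact s) (hne : s.Nonempty)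
    (l : StrongDual ℝ E) : ∃ x ∈ s.extremePoints ℝ, IsMaxOn l s x := by
  have hexp : IsExposed ℝ s (l.toExposed s) := ContinuousLinearMap.toExposed.isExposed
  obtain ⟨z, hzs, hz⟩ := hs.exists_isMaxOn hne l.continuous.continuousOn
  obtain ⟨x, hx⟩ := (hexp.isCompact hs).extremePoints_nonempty ⟨z, hzs, hz⟩
  exact ⟨x, hexp.isExtreme.extremePoints_subset_extremePoints hx, hx.1.2⟩

theorem IsCompact.exists_mem_extremePoints_isMinOn (hs : IsCompact s) (hne : s.Nonempty)
    (l : StrongDual ℝ E) : ∃ x ∈ s.extremePoints ℝ, IsMinOn l s x := by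
  obtain ⟨x, hx, hmax⟩ := hs.exists_mem_extremePoints_isMaxOn hne (-l)
  exact ⟨x, hx, isMinOn_iff.2 fun y hy => neg_le_neg_iff.1 (isMaxOn_iff.1 hmax y hy)⟩

end ExtremePoints

section Gambles

variable {Ω : Type*} [Fintype Ω]

noncomputable def ipCLM (g : Ω → ℝ) : StrongDual ℝ (Ω → ℝ) :=
  LinearMap.toContinuousLinearMap
    { toFun := fun p => ip p g
      map_add' := fun p q => by simp [ip, Finset.sum_add_distrib, add_mul]
      map_smul' := fun a p => by simp [ip, Finset.mul_sum, mul_assoc] }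

def credalSet (K : Set (Ω → ℝ)) (b : (Ω → ℝ) → ℝ) : Set (Ω → ℝ) :=
  {p | IsPMV p ∧ ∀ g ∈ K, b g ≤ ip p g}

theorem isCompact_credalSet (K : Set (Ω → ℝ)) (b : (Ω → ℝ) → ℝ) :
    IsCompact (credalSet K b) := by
  have hclosed : IsClosed {p : Ω → ℝ | ∀ g ∈ K, b g ≤ ip p g} := by
    simp only [Set.ofPred_forall]
    exact isClosed_biInter fun g _ => isClosed_le continuous_const (ipCLM g).continuous
  exact (isCompact_stdSimplex ℝ Ω).of_isClosed_subset
    ((isClosed_stdSimplex ℝ Ω).inter hclosed) fun p hp => hp.1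

end Gambles

theorem stmt17_general {Ω : Type*} [Fintype Ω]
    (K : Finset (Ω → ℝ)) (b : (Ω → ℝ) → ℝ)
    (M : Set (Ω → ℝ)) (hM : M = {p | IsPMV p ∧ ∀ g ∈ K, b g ≤ ip p g})
    (lE : (Ω → ℝ) → ℝ)
    (hlE : ∀ h : Ω → ℝ, IsLeast {r : ℝ | ∃ p ∈ M, r = ip p h} (lE h))
    (hcoh : ∀ g ∈ K, lE g = b g)
    (M' : Set (Ω → ℝ)) (hpmv' : ∀ p ∈ M', IsPMV p)
    (lP : (Ω → ℝ) → ℝ)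
    (hlP : ∀ h : Ω → ℝ, IsLeast {r : ℝ | ∃ p ∈ M', r = ip p h} (lP h))
    (hb' : ∀ g ∈ K, lP g = b g) :
    dLP lP lE ≤
      ⨆ E ∈ Set.extremePoints ℝ M, ⨅ f ∈ K,
        ⨆ F ∈ Set.extremePoints ℝ {q ∈ M | ip q f = lE f}, dNC M E F := by
  have hMcomp : IsCompact M := hM ▸ isCompact_credalSet (K : Set (Ω → ℝ)) b
  have hM'M : M' ⊆ M := fun p hp => hM ▸
    ⟨hpmv' p hp, fun g hg => hb' g hg ▸ (hlP g).2 ⟨p, hp, rfl⟩⟩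
  refine iSup₂_le fun h (hh : h ≠ 0) => ?_
  have hEP : lE h ≤ lP h := (hlP h).mono (hlE h) fun r ⟨p, hp, hr⟩ => ⟨p, hM'M hp, hr⟩
  obtain ⟨E, hEext, hEmin⟩ := hMcomp.exists_mem_extremePoints_isMinOn
    (let ⟨p, hp, _⟩ := (hlE h).1; ⟨p, hp⟩) (ipCLM h)
  have hEh : ip E h = lE h := le_antisymm
    (let ⟨p, hp, hpr⟩ := (hlE h).1; hpr ▸ hEmin hp) ((hlE h).2 ⟨E, hEext.1, rfl⟩)
  refine le_iSup₂_of_le E hEext (le_iInf₂ fun f hf => ?_)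
  obtain ⟨q, hqM', hqf⟩ := (hlP f).1
  have hqface : q ∈ {q ∈ M | ip q f = lE f} := ⟨hM'M hqM', by rw [← hqf, hb' f hf, hcoh f hf]⟩
  obtain ⟨F, hFext, hFmax⟩ := (hMcomp.inter_right (isClosed_eq (ipCLM f).continuous
    continuous_const)).exists_mem_extremePoints_isMaxOn ⟨q, hqface⟩ (ipCLM h)
  refine le_iSup₂_of_le F hFext (le_iSup₂_of_le h ⟨fun p hp => hEmin hp, hh⟩ ?_)
  rw [abs_of_nonneg (sub_nonneg.2 hEP), hEh]
  gcongr
  · exact Real.sqrt_nonneg _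
  · exact ((hlP h).2 ⟨q, hqM', rfl⟩).trans (hFmax hqface)

/-- for any extension `P̲` of a coherent assessment `(K, b)`,
`d(P̲, E̲) ≤ max_{E ∈ ext(M)} min_{f ∈ K} max_{F ∈ ext(M_f)} d_E(E, F)`. -/
theorem stmt17 {Ω : Type*} [Fintype Ω] [Nonempty Ω]
    (K : Finset (Ω → ℝ)) (hK : K.Nonempty) (b : (Ω → ℝ) → ℝ)
    (M : Set (Ω → ℝ)) (hM : M = {p | IsPMV p ∧ ∀ g ∈ K, b g ≤ ip p g})
    (hMne : M.Nonempty)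
    (lE : (Ω → ℝ) → ℝ)
    (hlE : ∀ h : Ω → ℝ, IsLeast {r : ℝ | ∃ p ∈ M, r = ip p h} (lE h))
    (hcoh : ∀ g ∈ K, lE g = b g)
    (M' : Set (Ω → ℝ)) (hne' : M'.Nonempty) (hcomp' : IsCompact M')
    (hconv' : Convex ℝ M') (hpmv' : ∀ p ∈ M', IsPMV p)
    (lP : (Ω → ℝ) → ℝ)
    (hlP : ∀ h : Ω → ℝ, IsLeast {r : ℝ | ∃ p ∈ M', r = ip p h} (lP h))
    (hb' : ∀ g ∈ K, lP g = b g) :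
    dLP lP lE ≤
      ⨆ E ∈ Set.extremePoints ℝ M, ⨅ f ∈ K,
        ⨆ F ∈ Set.extremePoints ℝ {q ∈ M | ip q f = lE f}, dNC M E F :=
  stmt17_general K b M hM lE hlE hcoh M' hpmv' lP hlP hb'
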